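/- arXiv:0811.1097 — 2 statements merged into one kernel-verified Lean document; each statement's English description precedes it below -/
import Mathlib

section
/- Almost surely, the total variation distance between the normalized invariant probability measure ρ̂ = (ρ_1 + ⋯ + ρ_n)^{-1}·(ρ_1 δ_1 + ⋯ + ρ_n δ_n) of K and the uniform probability measure U_n = (1/n)·(δ_1 + ⋯ + δ_n) on {1,…,n} tends to 0 as n → ∞, where the total variation distance is ‖μ−ν‖_TV = (1/2)·Σ_{k=1}^n |μ_k − ν_k|. -/
open MeasureTheory ProbabilityTheory Filter Topology

/-- Row sums `ρ_i = ∑_{j<n} U_{i,j}` of the weight array. -/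
noncomputable def rowSum {Ω : Type*} (U : ℕ → ℕ → Ω → ℝ) (n : ℕ) (ω : Ω) (i : ℕ) : ℝ :=
  ∑ j ∈ Finset.range n, U i j ω

/-!
Write `V i j = U i j - 1`, so that `ρ i - n = ∑ j, V i j`. Comparing `ρ̂` with `ρ / n²` and using
Cauchy–Schwarz, the total variation distance is at most `(n⁻³ ∑ i, (ρ i - n)²)^(1/2)`, and
`∑ i, (ρ i - n)² = ∑ i j, V i j² + ∑ i, ∑ j ≠ k, V i j * V i k`.

The first sum is nondecreasing in `n` with mean `n² σ²` (`σ²` the variance of `L`), so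
Borel–Cantelli along `n = 2 ^ k` shows that it is `o(n³)` almost surely. The second sum is not
monotone, but it has a small second moment: a product `V i j * V i k * V i' j' * V i' k'` of
entries at edges `{i,j} ≠ {i,k}` and `{i',j'} ≠ {i',k'}` has mean zero unless the two pairs of
edges coincide, so its second moment is `O(n³)` and Borel–Cantelli applies to its square divided
by `n⁶`.
-/

open Finset

namespace RandomMarkovMatrix

theorem tv_le_sum_abs_sub_div {ι : Type*} (s : Finset ι) (ρ : ι → ℝ) (hρ : ∀ i ∈ s, 0 ≤ ρ i)
    {c : ℝ} (hc : 0 < c) :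
    (1 / 2 : ℝ) * ∑ i ∈ s, |ρ i / ∑ j ∈ s, ρ j - 1 / #s| ≤ (∑ i ∈ s, |ρ i - c|) / (#s * c) := by
  rcases s.eq_empty_or_nonempty with rfl | hs
  · simp
  set S := ∑ j ∈ s, ρ j
  set M : ℝ := #s * c
  have hM : 0 < M := mul_pos (by exact_mod_cast hs.card_pos) hc
  -- valid also when `S = 0`, with `0⁻¹ = 0`
  have hsplit : ∀ i, ρ i / S - 1 / #s = ρ i * (S⁻¹ - M⁻¹) + (ρ i - c) / M := fun i => by
    have : (#s : ℝ) ≠ 0 := by exact_mod_cast hs.card_pos.ne'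
    field_simp
    ring
  have hnorm : S * |S⁻¹ - M⁻¹| ≤ (∑ i ∈ s, |ρ i - c|) / M := by
    have hS : 0 ≤ S := sum_nonneg hρ
    rcases hS.eq_or_lt with hS0 | hSpos
    · rw [← hS0, zero_mul]; positivity
    have hMS : M - S = ∑ i ∈ s, (c - ρ i) := by
      simp only [M, sum_sub_distrib, sum_const, nsmul_eq_mul, S]
    calc S * |S⁻¹ - M⁻¹| = |S * (S⁻¹ - M⁻¹)| := by rw [abs_mul, abs_of_pos hSpos]
      _ = |(M - S) / M| := by congr 1; field_simp
      _ = |M - S| / M := by rw [abs_div, abs_of_pos hM]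
      _ ≤ _ := by
          gcongr
          rw [hMS]
          exact (abs_sum_le_sum_abs _ _).trans_eq (sum_congr rfl fun i _ => abs_sub_comm _ _)
  calc (1 / 2 : ℝ) * ∑ i ∈ s, |ρ i / S - 1 / #s|
      ≤ (1 / 2) * ∑ i ∈ s, (ρ i * |S⁻¹ - M⁻¹| + |ρ i - c| / M) := by
        gcongr with i hi
        rw [hsplit]
        refine (abs_add_le _ _).trans_eq ?_
        rw [abs_mul, abs_div, abs_of_nonneg (hρ i hi), abs_of_pos hM]
    _ = (1 / 2) * (S * |S⁻¹ - M⁻¹| + (∑ i ∈ s, |ρ i - c|) / M) := by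
        rw [sum_add_distrib, ← sum_mul, ← sum_div]
    _ ≤ (∑ i ∈ s, |ρ i - c|) / M := by linarith

theorem tv_le_sqrt_sum_sq_div (ρ : ℕ → ℝ) (hρ : ∀ i, 0 ≤ ρ i) (n : ℕ) :
    (1 / 2 : ℝ) * ∑ i ∈ range n, |ρ i / ∑ j ∈ range n, ρ j - 1 / n|
      ≤ √((∑ i ∈ range n, (ρ i - n) ^ 2) / n ^ 3) := by
  rcases n.eq_zero_or_pos with rfl | hn
  · simp
  have hnR : (0 : ℝ) < n := by exact_mod_cast hn
  have htv := tv_le_sum_abs_sub_div (range n) ρ (fun i _ => hρ i) hnR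
  rw [card_range] at htv
  refine htv.trans (Real.le_sqrt_of_sq_le ?_)
  have hcs : (∑ i ∈ range n, |ρ i - n|) ^ 2 ≤ n * ∑ i ∈ range n, (ρ i - n) ^ 2 := by
    simpa using sq_sum_le_card_mul_sum_sq (s := range n) (f := fun i => |ρ i - n|)
  calc ((∑ i ∈ range n, |ρ i - n|) / (n * n)) ^ 2
      = (∑ i ∈ range n, |ρ i - n|) ^ 2 / n ^ 4 := by ring
    _ ≤ n * (∑ i ∈ range n, (ρ i - n) ^ 2) / n ^ 4 := by gcongr
    _ = (∑ i ∈ range n, (ρ i - n) ^ 2) / n ^ 3 := by field_simp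

theorem sum_sq_sum_eq {ι : Type*} [DecidableEq ι] (s : Finset ι) (v : ι → ι → ℝ) :
    ∑ i ∈ s, (∑ j ∈ s, v i j) ^ 2
      = ∑ i ∈ s, ∑ j ∈ s, v i j ^ 2 + ∑ t ∈ s ×ˢ s.offDiag, v t.1 t.2.1 * v t.1 t.2.2 := by
  rw [sum_product, ← sum_add_distrib]
  refine sum_congr rfl fun i _ => ?_
  rw [sq, sum_mul_sum, ← sum_product', ← diag_union_offDiag, sum_union (disjoint_diag_offDiag _),
    sum_diag]
  simp only [sq]

theorem tendsto_div_pow_of_monotone {a : ℕ → ℝ} (ha : Monotone a) (ha0 : ∀ n, 0 ≤ a n) (p : ℕ)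
    (h : Tendsto (fun k => a (2 ^ k) / (2 ^ k : ℝ) ^ p) atTop (𝓝 0)) :
    Tendsto (fun n => a n / (n : ℝ) ^ p) atTop (𝓝 0) := by
  have hlog : Tendsto (fun n => Nat.log 2 n + 1) atTop atTop :=
    tendsto_atTop_atTop.2 fun b =>
      ⟨2 ^ b, fun n hn => (Nat.le_log_of_pow_le one_lt_two hn).trans (Nat.le_succ _)⟩
  have hdom := (h.comp hlog).const_mul (2 ^ p)
  rw [mul_zero] at hdom
  refine squeeze_zero' (.of_forall fun n => div_nonneg (ha0 n) (by positivity)) ?_ hdom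
  filter_upwards [eventually_ne_atTop 0] with n hn
  set k := Nat.log 2 n
  have hlow : (2 ^ k : ℝ) ≤ n := by exact_mod_cast Nat.pow_log_le_self 2 hn
  have hup : n ≤ 2 ^ (k + 1) := (Nat.lt_pow_succ_log_self one_lt_two n).le
  calc a n / (n : ℝ) ^ p ≤ a (2 ^ (k + 1)) / (2 ^ k : ℝ) ^ p := by
        gcongr
        · exact ha0 _
        · exact ha hup
    _ = 2 ^ p * (a (2 ^ (k + 1)) / ((2 : ℝ) ^ (k + 1)) ^ p) := by
        rw [pow_succ (2 : ℝ), mul_pow]; field_simp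
    _ = _ := by simp [k]

section Independence

variable {Ω ι : Type*} [MeasurableSpace Ω] {μ : Measure Ω}

theorem ae_tendsto_zero_of_summable_integral {f : ℕ → Ω → ℝ} (hf : ∀ n ω, 0 ≤ f n ω)
    (hf_meas : ∀ n, Measurable (f n)) (hf_int : ∀ n, Integrable (f n) μ)
    (hsum : Summable fun n => ∫ ω, f n ω ∂μ) :
    ∀ᵐ ω ∂μ, Tendsto (fun n => f n ω) atTop (𝓝 0) := by
  have hlint : ∫⁻ ω, ∑' n, ENNReal.ofReal (f n ω) ∂μ ≠ ⊤ := by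
    rw [lintegral_tsum fun n => (hf_meas n).ennreal_ofReal.aemeasurable]
    simp_rw [← ofReal_integral_eq_lintegral_ofReal (hf_int _) (ae_of_all _ (hf _))]
    exact hsum.tsum_ofReal_ne_top
  filter_upwards [ae_lt_top (by fun_prop) hlint] with ω hω
  have h := (ENNReal.tendsto_toReal ENNReal.zero_ne_top).comp
    (ENNReal.tendsto_atTop_zero_of_tsum_ne_top hω.ne)
  simpa [Function.comp_def, ENNReal.toReal_ofReal (hf _ ω)] using h

variable {Y : ι → Ω → ℝ}

theorem integral_mul_mul_mul_eq_zero (hY : iIndepFun Y μ) (hmeas : ∀ i, Measurable (Y i))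
    {a b c d : ι} (hab : a ≠ b) (hac : a ≠ c) (had : a ≠ d) (h0 : ∫ ω, Y a ω ∂μ = 0) :
    ∫ ω, Y a ω * (Y b ω * Y c ω * Y d ω) ∂μ = 0 := by
  classical
  have hdisj : Disjoint ({a} : Finset ι) {b, c, d} := by simp [hab, hac, had]
  have hφ : Measurable fun x : ({a} : Finset ι) → ℝ => x ⟨a, mem_singleton_self a⟩ :=
    measurable_pi_apply _
  have hψ : Measurable fun x : ({b, c, d} : Finset ι) → ℝ =>
      x ⟨b, by simp⟩ * x ⟨c, by simp⟩ * x ⟨d, by simp⟩ := by fun_prop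
  have hind := (hY.indepFun_finset _ _ hdisj hmeas).comp hφ hψ
  have h := hind.integral_mul_eq_mul_integral (by fun_prop) (by fun_prop)
  simpa [Function.comp_def, h0] using h

theorem integral_mul_mul_mul_of_ne [DecidableEq ι] (hY : iIndepFun Y μ)
    (hmeas : ∀ i, Measurable (Y i)) (hmean : ∀ i, ∫ ω, Y i ω ∂μ = 0) {σ2 : ℝ}
    (hvar : ∀ i, ∫ ω, Y i ω ^ 2 ∂μ = σ2)
    {a b c d : ι} (hab : a ≠ b) (hcd : c ≠ d) :
    ∫ ω, Y a ω * Y b ω * (Y c ω * Y d ω) ∂μ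
      = if (a = c ∧ b = d) ∨ (a = d ∧ b = c) then σ2 ^ 2 else 0 := by
  split_ifs with hmatch
  · have hsq : ∀ ω, Y a ω * Y b ω * (Y c ω * Y d ω) = Y a ω ^ 2 * Y b ω ^ 2 := by
      rcases hmatch with ⟨rfl, rfl⟩ | ⟨rfl, rfl⟩ <;> intro ω <;> ring
    have hind := (hY.indepFun hab).comp (measurable_id.pow_const 2) (measurable_id.pow_const 2)
    have h := hind.integral_mul_eq_mul_integral (by fun_prop) (by fun_prop)
    simp only [Function.comp_def, id, Pi.mul_apply, hvar] at h
    simp_rw [hsq, h, sq]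
  · by_cases ha : a ≠ c ∧ a ≠ d
    · rw [← integral_mul_mul_mul_eq_zero hY hmeas hab ha.1 ha.2 (hmean a)]
      congr 1 with ω; ring
    · have hb : b ≠ a ∧ b ≠ c ∧ b ≠ d := by grind
      rw [← integral_mul_mul_mul_eq_zero hY hmeas hb.1 hb.2.1 hb.2.2 (hmean b)]
      congr 1 with ω; ring

theorem memLp_two_mul (hY : iIndepFun Y μ) (hmeas : ∀ i, Measurable (Y i))
    (hL2 : ∀ i, MemLp (Y i) 2 μ) {a b : ι} (hab : a ≠ b) :
    MemLp (fun ω => Y a ω * Y b ω) 2 μ := by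
  refine (memLp_two_iff_integrable_sq (by fun_prop)).2 ?_
  have hind := (hY.indepFun hab).comp (measurable_id.pow_const 2) (measurable_id.pow_const 2)
  refine (hind.integrable_mul (hL2 a).integrable_sq (hL2 b).integrable_sq).congr
    (.of_forall fun ω => ?_)
  simp [mul_pow]

theorem integral_sq_sum_mul {κ : Type*} [DecidableEq ι] (hY : iIndepFun Y μ)
    (hmeas : ∀ i, Measurable (Y i)) (hL2 : ∀ i, MemLp (Y i) 2 μ)
    (hmean : ∀ i, ∫ ω, Y i ω ∂μ = 0) {σ2 : ℝ} (hvar : ∀ i, ∫ ω, Y i ω ^ 2 ∂μ = σ2)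
    (T : Finset κ) {f g : κ → ι} (hfg : ∀ t ∈ T, f t ≠ g t) :
    ∫ ω, (∑ t ∈ T, Y (f t) ω * Y (g t) ω) ^ 2 ∂μ
      = σ2 ^ 2 * ∑ t ∈ T, #{t' ∈ T | (f t = f t' ∧ g t = g t') ∨ (f t = g t' ∧ g t = f t')} := by
  have hint : ∀ t ∈ T, ∀ t' ∈ T, Integrable
      (fun ω => Y (f t) ω * Y (g t) ω * (Y (f t') ω * Y (g t') ω)) μ := fun t ht t' ht' =>
    (memLp_two_mul hY hmeas hL2 (hfg t ht)).integrable_mul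
      (memLp_two_mul hY hmeas hL2 (hfg t' ht'))
  have hexpand : ∀ ω, (∑ t ∈ T, Y (f t) ω * Y (g t) ω) ^ 2
      = ∑ t ∈ T, ∑ t' ∈ T, Y (f t) ω * Y (g t) ω * (Y (f t') ω * Y (g t') ω) := fun ω => by
    rw [sq, sum_mul_sum]
  simp_rw [hexpand]
  rw [integral_finsetSum _ fun t ht => integrable_finsetSum _ (hint t ht)]
  push_cast
  rw [mul_sum]
  refine sum_congr rfl fun t ht => ?_
  rw [integral_finsetSum _ (hint t ht), sum_congr rfl fun t' ht' =>
      integral_mul_mul_mul_of_ne hY hmeas hmean hvar (hfg t ht) (hfg t' ht'),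
    sum_ite, sum_const, sum_const_zero, add_zero, nsmul_eq_mul, mul_comm]

end Independence

-- The entry `U i j` of the symmetric array is the member `edge i j` of the independent family.
def edge (i j : ℕ) : {q : ℕ × ℕ // q.1 ≤ q.2} := ⟨(min i j, max i j), min_le_max⟩

theorem edge_eq_edge_iff {i j k l : ℕ} :
    edge i j = edge k l ↔ (i = k ∧ j = l) ∨ (i = l ∧ j = k) := by
  simp only [edge, Subtype.mk.injEq, Prod.mk.injEq]
  omega

theorem edge_ne_edge_of_mem {n : ℕ} {t : ℕ × ℕ × ℕ} (ht : t ∈ range n ×ˢ (range n).offDiag) :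
    edge t.1 t.2.1 ≠ edge t.1 t.2.2 := by
  simp only [mem_product, mem_offDiag] at ht
  rw [Ne, edge_eq_edge_iff]
  omega

theorem apply_edge {α : Type*} {U : ℕ → ℕ → α} (hsymm : ∀ i j, U i j = U j i) (i j : ℕ) :
    U (edge i j).1.1 (edge i j).1.2 = U i j := by
  rcases le_total i j with h | h
  · simp [edge, h]
  · simp [edge, h, hsymm j i]

theorem card_filter_edge_match_le (n : ℕ) (t : ℕ × ℕ × ℕ) :
    #{t' ∈ range n ×ˢ (range n).offDiag |
      (edge t.1 t.2.1 = edge t'.1 t'.2.1 ∧ edge t.1 t.2.2 = edge t'.1 t'.2.2) ∨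
      (edge t.1 t.2.1 = edge t'.1 t'.2.2 ∧ edge t.1 t.2.2 = edge t'.1 t'.2.1)} ≤ 27 := by
  set S : Finset ℕ := {t.1, t.2.1, t.2.2}
  have hsub : {t' ∈ range n ×ˢ (range n).offDiag |
      (edge t.1 t.2.1 = edge t'.1 t'.2.1 ∧ edge t.1 t.2.2 = edge t'.1 t'.2.2) ∨
      (edge t.1 t.2.1 = edge t'.1 t'.2.2 ∧ edge t.1 t.2.2 = edge t'.1 t'.2.1)} ⊆ S ×ˢ S ×ˢ S := by
    rintro ⟨i, j, k⟩ ht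
    simp only [mem_filter, edge_eq_edge_iff] at ht
    simp only [S, mem_product, mem_insert, mem_singleton]
    omega
  have hS : #S ≤ 3 := card_le_three
  calc _ ≤ #(S ×ˢ S ×ˢ S) := card_le_card hsub
    _ = #S * (#S * #S) := by rw [card_product, card_product]
    _ ≤ 3 * (3 * 3) := by gcongr

section Model

variable {Ω : Type*} {U : ℕ → ℕ → Ω → ℝ}

def squareSum (U : ℕ → ℕ → Ω → ℝ) (n : ℕ) (ω : Ω) : ℝ :=
  ∑ i ∈ range n, ∑ j ∈ range n, (U i j ω - 1) ^ 2

def crossSum (U : ℕ → ℕ → Ω → ℝ) (n : ℕ) (ω : Ω) : ℝ :=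
  ∑ t ∈ range n ×ˢ (range n).offDiag, (U t.1 t.2.1 ω - 1) * (U t.1 t.2.2 ω - 1)

def centeredEntry (U : ℕ → ℕ → Ω → ℝ) (p : {q : ℕ × ℕ // q.1 ≤ q.2}) (ω : Ω) : ℝ :=
  U p.1.1 p.1.2 ω - 1

theorem sum_sq_rowSum_sub (U : ℕ → ℕ → Ω → ℝ) (n : ℕ) (ω : Ω) :
    ∑ i ∈ range n, (rowSum U n ω i - n) ^ 2 = squareSum U n ω + crossSum U n ω := by
  have hrow : ∀ i, rowSum U n ω i - n = ∑ j ∈ range n, (U i j ω - 1) := fun i => by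
    simp [rowSum, sum_sub_distrib]
  simp only [hrow, sum_sq_sum_eq, squareSum, crossSum]

theorem monotone_squareSum (U : ℕ → ℕ → Ω → ℝ) (ω : Ω) : Monotone fun n => squareSum U n ω :=
  fun m n hmn =>
    calc squareSum U m ω ≤ ∑ i ∈ range m, ∑ j ∈ range n, (U i j ω - 1) ^ 2 :=
          sum_le_sum fun _ _ => sum_le_sum_of_subset_of_nonneg (range_subset_range.2 hmn)
            fun _ _ _ => sq_nonneg _
      _ ≤ squareSum U n ω := sum_le_sum_of_subset_of_nonneg (range_subset_range.2 hmn)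
            fun _ _ _ => sum_nonneg fun _ _ => sq_nonneg _

theorem crossSum_eq (hsymm : ∀ i j, U i j = U j i) (n : ℕ) (ω : Ω) :
    crossSum U n ω = ∑ t ∈ range n ×ˢ (range n).offDiag,
      centeredEntry U (edge t.1 t.2.1) ω * centeredEntry U (edge t.1 t.2.2) ω := by
  simp only [crossSum, centeredEntry, apply_edge hsymm]

variable [MeasurableSpace Ω] {P : Measure Ω} {L : Measure ℝ}

theorem integral_comp_of_map_eq {X : Ω → ℝ} (hX : Measurable X) (hXL : P.map X = L)
    {g : ℝ → ℝ} (hg : Measurable g) : ∫ ω, g (X ω) ∂P = ∫ x, g x ∂L := by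
  rw [← hXL, integral_map hX.aemeasurable hg.aestronglyMeasurable]

theorem integral_squareSum (hmeas : ∀ i j, Measurable (U i j))
    (hdist : ∀ i j, P.map (U i j) = L) (hvar : Integrable (fun x => (x - 1) ^ 2) L) (n : ℕ) :
    ∫ ω, squareSum U n ω ∂P = (n : ℝ) ^ 2 * ∫ x, (x - 1) ^ 2 ∂L := by
  have hint : ∀ i j, Integrable (fun ω => (U i j ω - 1) ^ 2) P := fun i j =>
    (hdist i j ▸ hvar).comp_measurable (hmeas i j)
  have hentry : ∀ i j, ∫ ω, (U i j ω - 1) ^ 2 ∂P = ∫ x, (x - 1) ^ 2 ∂L := fun i j =>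
    integral_comp_of_map_eq (hmeas i j) (hdist i j) (g := fun x => (x - 1) ^ 2) (by fun_prop)
  simp only [squareSum]
  rw [integral_finsetSum _ fun i _ => integrable_finsetSum _ fun j _ => hint i j]
  simp_rw [integral_finsetSum _ fun j _ => hint _ j, hentry, sum_const, card_range, nsmul_eq_mul]
  ring

theorem ae_tendsto_squareSum_div_cube (hmeas : ∀ i j, Measurable (U i j))
    (hdist : ∀ i j, P.map (U i j) = L) (hvar : Integrable (fun x => (x - 1) ^ 2) L) :
    ∀ᵐ ω ∂P, Tendsto (fun n : ℕ => squareSum U n ω / (n : ℝ) ^ 3) atTop (𝓝 0) := by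
  have hnonneg : ∀ n ω, 0 ≤ squareSum U n ω := fun n ω =>
    sum_nonneg fun _ _ => sum_nonneg fun _ _ => sq_nonneg _
  have hmoment : ∀ k : ℕ, ∫ ω, squareSum U (2 ^ k) ω / (2 ^ k : ℝ) ^ 3 ∂P
      = (∫ x, (x - 1) ^ 2 ∂L) * (1 / 2) ^ k := fun k => by
    rw [integral_div, integral_squareSum hmeas hdist hvar]
    generalize ∫ x, (x - 1) ^ 2 ∂L = σ2
    push_cast
    rw [one_div_pow]
    field_simp
  have hdyadic := ae_tendsto_zero_of_summable_integral (μ := P)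
    (f := fun k ω => squareSum U (2 ^ k) ω / (2 ^ k : ℝ) ^ 3)
    (fun k ω => div_nonneg (hnonneg _ ω) (by positivity))
    (fun k => by unfold squareSum; fun_prop)
    (fun k => (integrable_finsetSum _ fun i _ => integrable_finsetSum _ fun j _ =>
      (hdist i j ▸ hvar).comp_measurable (hmeas i j)).div_const _)
    ((summable_geometric_two.mul_left _).congr fun k => (hmoment k).symm)
  filter_upwards [hdyadic] with ω hω
  exact tendsto_div_pow_of_monotone (monotone_squareSum U ω) (hnonneg · ω) 3 (by simpa using hω)

theorem iIndepFun_centeredEntry (hindep : iIndepFun (fun p : {q : ℕ × ℕ // q.1 ≤ q.2} =>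
    U p.1.1 p.1.2) P) : iIndepFun (centeredEntry U) P :=
  hindep.comp _ fun _ => measurable_id.sub_const 1

theorem measurable_centeredEntry (hmeas : ∀ i j, Measurable (U i j))
    (p : {q : ℕ × ℕ // q.1 ≤ q.2}) : Measurable (centeredEntry U p) :=
  (hmeas _ _).sub_const 1

theorem memLp_centeredEntry (hmeas : ∀ i j, Measurable (U i j))
    (hdist : ∀ i j, P.map (U i j) = L) (hvar : Integrable (fun x => (x - 1) ^ 2) L)
    (p : {q : ℕ × ℕ // q.1 ≤ q.2}) : MemLp (centeredEntry U p) 2 P :=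
  (memLp_two_iff_integrable_sq (measurable_centeredEntry hmeas p).aestronglyMeasurable).2
    ((hdist _ _ ▸ hvar).comp_measurable (hmeas _ _))

theorem integral_centeredEntry [IsProbabilityMeasure L] (hmeas : ∀ i j, Measurable (U i j))
    (hdist : ∀ i j, P.map (U i j) = L) (hL1 : Integrable (fun x => x) L)
    (hmean : ∫ x, x ∂L = 1) (p : {q : ℕ × ℕ // q.1 ≤ q.2}) :
    ∫ ω, centeredEntry U p ω ∂P = 0 :=
  calc ∫ ω, centeredEntry U p ω ∂P = ∫ x, (x - 1) ∂L :=
        integral_comp_of_map_eq (hmeas _ _) (hdist _ _) (g := fun x => x - 1) (by fun_prop)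
    _ = 0 := by rw [integral_sub hL1 (integrable_const 1), hmean]; simp

theorem integral_centeredEntry_sq (hmeas : ∀ i j, Measurable (U i j))
    (hdist : ∀ i j, P.map (U i j) = L) (p : {q : ℕ × ℕ // q.1 ≤ q.2}) :
    ∫ ω, centeredEntry U p ω ^ 2 ∂P = ∫ x, (x - 1) ^ 2 ∂L :=
  integral_comp_of_map_eq (hmeas _ _) (hdist _ _) (g := fun x => (x - 1) ^ 2) (by fun_prop)

theorem memLp_crossSum (hmeas : ∀ i j, Measurable (U i j)) (hsymm : ∀ i j, U i j = U j i)
    (hdist : ∀ i j, P.map (U i j) = L)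
    (hindep : iIndepFun (fun p : {q : ℕ × ℕ // q.1 ≤ q.2} => U p.1.1 p.1.2) P)
    (hvar : Integrable (fun x => (x - 1) ^ 2) L) (n : ℕ) : MemLp (crossSum U n) 2 P := by
  simp_rw [funext (crossSum_eq hsymm n)]
  exact memLp_finsetSum _ fun t ht => memLp_two_mul (iIndepFun_centeredEntry hindep)
    (measurable_centeredEntry hmeas) (memLp_centeredEntry hmeas hdist hvar)
    (edge_ne_edge_of_mem ht)

theorem integral_crossSum_sq_le [IsProbabilityMeasure L] (hmeas : ∀ i j, Measurable (U i j))
    (hsymm : ∀ i j, U i j = U j i) (hdist : ∀ i j, P.map (U i j) = L)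
    (hindep : iIndepFun (fun p : {q : ℕ × ℕ // q.1 ≤ q.2} => U p.1.1 p.1.2) P)
    (hL1 : Integrable (fun x => x) L) (hmean : ∫ x, x ∂L = 1)
    (hvar : Integrable (fun x => (x - 1) ^ 2) L) (n : ℕ) :
    ∫ ω, crossSum U n ω ^ 2 ∂P ≤ 27 * (∫ x, (x - 1) ^ 2 ∂L) ^ 2 * (n : ℝ) ^ 3 := by
  simp_rw [crossSum_eq hsymm n]
  rw [integral_sq_sum_mul (iIndepFun_centeredEntry hindep) (measurable_centeredEntry hmeas)
    (memLp_centeredEntry hmeas hdist hvar) (integral_centeredEntry hmeas hdist hL1 hmean)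
    (integral_centeredEntry_sq hmeas hdist) _ fun t => edge_ne_edge_of_mem]
  have hcount : ∑ t ∈ range n ×ˢ (range n).offDiag, #{t' ∈ range n ×ˢ (range n).offDiag |
      (edge t.1 t.2.1 = edge t'.1 t'.2.1 ∧ edge t.1 t.2.2 = edge t'.1 t'.2.2) ∨
      (edge t.1 t.2.1 = edge t'.1 t'.2.2 ∧ edge t.1 t.2.2 = edge t'.1 t'.2.1)} ≤ 27 * n ^ 3 :=
    calc _ ≤ #(range n ×ˢ (range n).offDiag) * 27 :=
          sum_le_card_nsmul _ _ _ fun t _ => card_filter_edge_match_le n t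
      _ ≤ 27 * n ^ 3 := by
          rw [card_product, offDiag_card, card_range]
          have : n * n - n ≤ n * n := Nat.sub_le _ _
          nlinarith
  calc _ ≤ (∫ x, (x - 1) ^ 2 ∂L) ^ 2 * ((27 * n ^ 3 : ℕ) : ℝ) := by gcongr
    _ = _ := by push_cast; ring

theorem ae_tendsto_crossSum_div_cube [IsProbabilityMeasure L] (hmeas : ∀ i j, Measurable (U i j))
    (hsymm : ∀ i j, U i j = U j i) (hdist : ∀ i j, P.map (U i j) = L)
    (hindep : iIndepFun (fun p : {q : ℕ × ℕ // q.1 ≤ q.2} => U p.1.1 p.1.2) P)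
    (hL1 : Integrable (fun x => x) L) (hmean : ∫ x, x ∂L = 1)
    (hvar : Integrable (fun x => (x - 1) ^ 2) L) :
    ∀ᵐ ω ∂P, Tendsto (fun n : ℕ => crossSum U n ω / (n : ℝ) ^ 3) atTop (𝓝 0) := by
  set σ2 := ∫ x, (x - 1) ^ 2 ∂L
  have hbound : ∀ n : ℕ, ∫ ω, (crossSum U n ω / (n : ℝ) ^ 3) ^ 2 ∂P
      ≤ 27 * σ2 ^ 2 * ((n : ℝ) ^ 3)⁻¹ := fun n => by
    simp_rw [div_pow]
    rw [integral_div]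
    rcases n.eq_zero_or_pos with rfl | hn
    · simp
    calc (∫ ω, crossSum U n ω ^ 2 ∂P) / ((n : ℝ) ^ 3) ^ 2
        ≤ 27 * σ2 ^ 2 * n ^ 3 / ((n : ℝ) ^ 3) ^ 2 := by
          gcongr
          exact integral_crossSum_sq_le hmeas hsymm hdist hindep hL1 hmean hvar n
      _ = _ := by field_simp
  have hsq := ae_tendsto_zero_of_summable_integral (μ := P)
    (f := fun n ω => (crossSum U n ω / (n : ℝ) ^ 3) ^ 2) (fun n ω => by positivity)
    (fun n => by unfold crossSum; fun_prop)
    (fun n => by simpa [div_pow] using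
      (memLp_crossSum hmeas hsymm hdist hindep hvar n).integrable_sq.div_const (((n : ℝ) ^ 3) ^ 2))
    (.of_nonneg_of_le (fun n => integral_nonneg fun ω => by positivity) hbound
      ((Real.summable_nat_pow_inv.2 (by norm_num)).mul_left _))
  filter_upwards [hsq] with ω hω
  have habs := hω.sqrt
  simp only [Real.sqrt_sq_eq_abs, Real.sqrt_zero] at habs
  exact (tendsto_zero_iff_abs_tendsto_zero _).2 habs

end Model

end RandomMarkovMatrix

open RandomMarkovMatrix

theorem complete_graph_invariant_measure_tv_general
    {Ω : Type*} [MeasurableSpace Ω] (P : Measure Ω)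
    (U : ℕ → ℕ → Ω → ℝ) (L : Measure ℝ) [IsProbabilityMeasure L]
    (hmeas : ∀ i j, Measurable (U i j))
    (hsymm : ∀ i j, U i j = U j i)
    (hdist : ∀ i j, Measure.map (U i j) P = L)
    (hindep : iIndepFun
      (fun p : {q : ℕ × ℕ // q.1 ≤ q.2} => U p.1.1 p.1.2) P)
    (hnonneg : ∀ᵐ x ∂L, 0 ≤ x)
    (hL1 : Integrable (fun x => x) L)
    (hmean : ∫ x, x ∂L = 1)
    (hL2 : Integrable (fun x => x^2) L) :
    ∀ᵐ ω ∂P,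
      Tendsto
        (fun n : ℕ =>
          (1/2 : ℝ) * ∑ i ∈ Finset.range n,
            |rowSum U n ω i / (∑ j ∈ Finset.range n, rowSum U n ω j) - 1/n|)
        atTop (𝓝 0) := by
  have hvar : Integrable (fun x => (x - 1) ^ 2) L :=
    ((hL2.sub (hL1.const_mul 2)).add (integrable_const 1)).congr
      (ae_of_all _ fun x => by simp only [Pi.add_apply, Pi.sub_apply]; ring)
  have hpos : ∀ᵐ ω ∂P, ∀ i j, 0 ≤ U i j ω := by
    simp only [ae_all_iff]
    exact fun i j => ae_of_ae_map (hmeas i j).aemeasurable (hdist i j ▸ hnonneg)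
  filter_upwards [hpos, ae_tendsto_squareSum_div_cube hmeas hdist hvar,
    ae_tendsto_crossSum_div_cube hmeas hsymm hdist hindep hL1 hmean hvar] with ω hω hsquare hcross
  have hvariance : Tendsto (fun n : ℕ => (∑ i ∈ range n, (rowSum U n ω i - n) ^ 2) / (n : ℝ) ^ 3)
      atTop (𝓝 0) := by
    simpa only [sum_sq_rowSum_sub, add_div, add_zero] using hsquare.add hcross
  refine squeeze_zero (fun n => by positivity) (fun n => tv_le_sqrt_sum_sq_div (rowSum U n ω)
    (fun i => sum_nonneg fun j _ => hω i j) n) ?_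
  simpa only [Real.sqrt_zero] using hvariance.sqrt

/-- **Invariant probability measure (Proposition 1.5).** If `L` has mean `1` and finite
second moment, then almost surely the total variation distance
`‖ρ̂ − U_n‖_TV = (1/2)·∑_i |ρ_i/(ρ_1+⋯+ρ_n) − 1/n|` between the normalized invariant
measure `ρ̂` of `K` and the uniform law on `{1,…,n}` tends to `0` as `n → ∞`. -/
theorem complete_graph_invariant_measure_tv
    {Ω : Type*} [MeasurableSpace Ω] (P : Measure Ω) [IsProbabilityMeasure P]
    (U : ℕ → ℕ → Ω → ℝ) (L : Measure ℝ) [IsProbabilityMeasure L]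
    (hmeas : ∀ i j, Measurable (U i j))
    (hsymm : ∀ i j, U i j = U j i)
    (hdist : ∀ i j, Measure.map (U i j) P = L)
    (hindep : iIndepFun
      (fun p : {q : ℕ × ℕ // q.1 ≤ q.2} => U p.1.1 p.1.2) P)
    (hnonneg : ∀ᵐ x ∂L, 0 ≤ x)
    (hL1 : Integrable (fun x => x) L)
    (hmean : ∫ x, x ∂L = 1)
    (hL2 : Integrable (fun x => x^2) L) :
    ∀ᵐ ω ∂P,
      Tendsto
        (fun n : ℕ =>
          (1/2 : ℝ) * ∑ i ∈ Finset.range n,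
            |rowSum U n ω i / (∑ j ∈ Finset.range n, rowSum U n ω j) - 1/n|)
        atTop (𝓝 0) :=
  complete_graph_invariant_measure_tv_general P U L hmeas hsymm hdist hindep hnonneg hL1 hmean hL2
end

section
/- Almost surely, (1/n)·Σ_{i,j=1}^n (√n·S_{i,j} − U_{i,j}/√n)² = O(δ_n²) as n → ∞, where δ_n = max_{1 ≤ i ≤ n} |ρ_i/n − 1| and S_{i,j} = U_{i,j}/√(ρ_i ρ_j); that is, almost surely there is a constant C such that for all large n this normalized squared Hilbert–Schmidt distance between √n·S and the matrix W̃ with entries W̃_{i,j} = U_{i,j}/√n is at most C·δ_n². -/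
/-!
Where every row sum exceeds `n / 2`, the `(i, j)` entry of `√n • S - W̃` is
`(U i j / √n) * ((ρ i / n)^(-1/2) * (ρ j / n)^(-1/2) - 1)` and the bracket is at most `3 δ_n`,
so the normalised squared distance is at most `9 δ_n² n⁻² ∑_{i,j<n} U i j ²`. Almost surely this
last sum is `O(n²)`, by the strong law of large numbers along an enumeration of the upper
triangle in which the pairs with `j < n` come first, and eventually every row sum exceeds
`n / 2`, by a lower-tail Chernoff bound (for nonnegative variables it needs only a second
moment) and Borel–Cantelli.
-/

open MeasureTheory ProbabilityTheory Filter Topology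

/-- The symmetrized matrix `S_{i,j} = U_{i,j}/√(ρ_i ρ_j)`. -/
noncomputable def Smat {Ω : Type*} (U : ℕ → ℕ → Ω → ℝ) (n : ℕ) (ω : Ω) :
    Matrix (Fin n) (Fin n) ℝ := fun i j =>
  U i j ω / Real.sqrt (rowSum U n ω i * rowSum U n ω j)

/-- `δ_n = max_{i<n} |ρ_i/n − 1|`. -/
noncomputable def deltaMax {Ω : Type*} (U : ℕ → ℕ → Ω → ℝ) (n : ℕ) (ω : Ω) : ℝ :=
  (((Finset.range n).sup fun i => ‖rowSum U n ω i / n - 1‖₊ : NNReal) : ℝ)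

open Real Finset

lemma exp_neg_le_one_sub_add_sq {y : ℝ} (hy : 0 ≤ y) : exp (-y) ≤ 1 - y + y ^ 2 := by
  have hpos : 0 < 1 + y := by linarith
  calc exp (-y) = (exp y)⁻¹ := exp_neg y
    _ ≤ (1 + y)⁻¹ := inv_anti₀ hpos (by linarith [add_one_le_exp y])
    _ ≤ 1 - y + y ^ 2 := by
        rw [inv_le_iff_one_le_mul₀ hpos]
        nlinarith [pow_nonneg hy 3]

lemma abs_inv_sqrt_sub_one_le {x : ℝ} (hx : 1 / 2 ≤ x) : |(√x)⁻¹ - 1| ≤ |x - 1| := by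
  have hs : 0 < √x := sqrt_pos.2 (by linarith)
  have hsq : √x ^ 2 = x := sq_sqrt (by linarith)
  have hinv : (√x)⁻¹ ≤ √x + 1 := by
    rw [inv_le_iff_one_le_mul₀ hs]
    nlinarith
  calc |(√x)⁻¹ - 1| = (√x)⁻¹ * |√x - 1| := by
        rw [← abs_of_pos (inv_pos.2 hs), ← abs_mul, abs_of_pos (inv_pos.2 hs),
          abs_sub_comm, mul_sub, inv_mul_cancel₀ hs.ne', mul_one]
    _ ≤ (√x + 1) * |√x - 1| := by gcongr
    _ = |x - 1| := by
        rw [← abs_of_pos (by positivity : 0 < √x + 1), ← abs_mul]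
        congr 1
        nlinarith

lemma abs_inv_sqrt_mul_inv_sqrt_sub_one_le {x y δ : ℝ} (hx : 1 / 2 ≤ x) (hy : 1 / 2 ≤ y)
    (hxδ : |x - 1| ≤ δ) (hyδ : |y - 1| ≤ δ) : |(√x)⁻¹ * (√y)⁻¹ - 1| ≤ 3 * δ := by
  have hs : 0 < √x := sqrt_pos.2 (by linarith)
  have hinv : (√x)⁻¹ ≤ 2 := by
    rw [inv_le_iff_one_le_mul₀ hs]
    nlinarith [sq_sqrt (by linarith : (0 : ℝ) ≤ x)]
  calc |(√x)⁻¹ * (√y)⁻¹ - 1| = |(√x)⁻¹ * ((√y)⁻¹ - 1) + ((√x)⁻¹ - 1)| := by ring_nf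
    _ ≤ (√x)⁻¹ * |(√y)⁻¹ - 1| + |(√x)⁻¹ - 1| := by
        grw [abs_add_le, abs_mul, abs_of_pos (inv_pos.2 hs)]
    _ ≤ 2 * δ + δ := by
        gcongr
        · exact (abs_inv_sqrt_sub_one_le hy).trans hyδ
        · exact (abs_inv_sqrt_sub_one_le hx).trans hxδ
    _ = 3 * δ := by ring

lemma sq_sqrt_mul_div_sqrt_mul_sub_div_sqrt_le {ν a b u δ : ℝ} (hν : 0 < ν)
    (ha : ν / 2 ≤ a) (hb : ν / 2 ≤ b) (haδ : |a / ν - 1| ≤ δ) (hbδ : |b / ν - 1| ≤ δ) :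
    (√ν * (u / √(a * b)) - u / √ν) ^ 2 ≤ 9 * δ ^ 2 * u ^ 2 / ν := by
  have hx : 1 / 2 ≤ a / ν := by rw [le_div_iff₀ hν]; linarith
  have hy : 1 / 2 ≤ b / ν := by rw [le_div_iff₀ hν]; linarith
  have hsx : 0 < √(a / ν) := sqrt_pos.2 (by linarith)
  have hsy : 0 < √(b / ν) := sqrt_pos.2 (by linarith)
  have hsν : 0 < √ν := sqrt_pos.2 hν
  have hab : √(a * b) = √ν ^ 2 * (√(a / ν) * √(b / ν)) := by
    rw [sq_sqrt hν.le, ← sqrt_mul (by linarith), show a * b = ν ^ 2 * (a / ν * (b / ν)) by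
      field_simp, sqrt_mul (by positivity), sqrt_sq hν.le]
  have key : √ν * (u / √(a * b)) - u / √ν
      = u / √ν * ((√(a / ν))⁻¹ * (√(b / ν))⁻¹ - 1) := by
    rw [hab]
    field_simp
  calc (√ν * (u / √(a * b)) - u / √ν) ^ 2
      = u ^ 2 / ν * |(√(a / ν))⁻¹ * (√(b / ν))⁻¹ - 1| ^ 2 := by
        rw [key, mul_pow, div_pow, sq_sqrt hν.le, sq_abs]
    _ ≤ u ^ 2 / ν * (3 * δ) ^ 2 := by
        gcongr
        exact abs_inv_sqrt_mul_inv_sqrt_sub_one_le hx hy haδ hbδ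
    _ = 9 * δ ^ 2 * u ^ 2 / ν := by ring

lemma abs_rowSum_div_sub_one_le_deltaMax {Ω : Type*} (U : ℕ → ℕ → Ω → ℝ) {n i : ℕ} (ω : Ω)
    (hi : i < n) : |rowSum U n ω i / n - 1| ≤ deltaMax U n ω := by
  rw [← Real.norm_eq_abs, ← coe_nnnorm, deltaMax, NNReal.coe_le_coe]
  exact Finset.le_sup (f := fun i => ‖rowSum U n ω i / n - 1‖₊) (mem_range.2 hi)

lemma hilbertSchmidt_sq_le_of_half_lt_rowSum {Ω : Type*} (U : ℕ → ℕ → Ω → ℝ) {n : ℕ} (ω : Ω)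
    (hn : 0 < n)
    (hrow : ∀ i < n, (n : ℝ) / 2 < rowSum U n ω i) :
    (1 / n : ℝ) * ∑ i : Fin n, ∑ j : Fin n, (√n * Smat U n ω i j - U i j ω / √n) ^ 2
      ≤ 9 * deltaMax U n ω ^ 2 / n ^ 2 * ∑ i ∈ range n, ∑ j ∈ range n, U i j ω ^ 2 := by
  have hν : (0 : ℝ) < n := by exact_mod_cast hn
  calc (1 / n : ℝ) * ∑ i : Fin n, ∑ j : Fin n, (√n * Smat U n ω i j - U i j ω / √n) ^ 2
      ≤ (1 / n : ℝ) * ∑ i : Fin n, ∑ j : Fin n, 9 * deltaMax U n ω ^ 2 * U i j ω ^ 2 / n := by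
        gcongr with i _ j _
        exact sq_sqrt_mul_div_sqrt_mul_sub_div_sqrt_le hν (hrow i i.isLt).le (hrow j j.isLt).le
          (abs_rowSum_div_sub_one_le_deltaMax U ω i.isLt)
          (abs_rowSum_div_sub_one_le_deltaMax U ω j.isLt)
    _ = 9 * deltaMax U n ω ^ 2 / n ^ 2 * ∑ i ∈ range n, ∑ j ∈ range n, U i j ω ^ 2 := by
        simp only [Finset.sum_range, Finset.mul_sum]
        refine Finset.sum_congr rfl fun i _ => Finset.sum_congr rfl fun j _ => ?_
        field_simp

/-- Enumeration of `{(i, j) | i ≤ j}` through `Nat.unpair`, so that the pairs with `j < n`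
come among the first `n ^ 2`. -/
def upperPair (k : ℕ) : {q : ℕ × ℕ // q.1 ≤ q.2} :=
  ⟨((Nat.unpair k).1, (Nat.unpair k).1 + (Nat.unpair k).2), Nat.le_add_right _ _⟩

lemma upperPair_injective : Function.Injective upperPair := by
  intro k l h
  simp only [upperPair, Subtype.mk.injEq, Prod.mk.injEq] at h
  have : Nat.unpair k = Nat.unpair l := Prod.ext h.1 (by omega)
  rw [← Nat.pair_unpair k, ← Nat.pair_unpair l, this]

lemma upperPair_pair {i j : ℕ} (hij : i ≤ j) : (upperPair (Nat.pair i (j - i))).1 = (i, j) := by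
  simp [upperPair, Nat.unpair_pair, Nat.add_sub_cancel' hij]

lemma sum_range_sum_range_le_two_mul_sum_filter_le (g : ℕ → ℕ → ℝ) (hg : ∀ i j, 0 ≤ g i j)
    (hsymm : ∀ i j, g i j = g j i) (n : ℕ) :
    ∑ i ∈ range n, ∑ j ∈ range n, g i j
      ≤ 2 * ∑ p ∈ range n ×ˢ range n with p.1 ≤ p.2, g p.1 p.2 := by
  have hswap : ∑ p ∈ range n ×ˢ range n with p.2 ≤ p.1, g p.1 p.2
      = ∑ p ∈ range n ×ˢ range n with p.1 ≤ p.2, g p.1 p.2 :=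
    Finset.sum_nbij' Prod.swap Prod.swap (fun p hp => by simp_all) (fun p hp => by simp_all)
      (fun _ _ => rfl) (fun _ _ => rfl) (fun p _ => hsymm p.1 p.2)
  rw [← Finset.sum_product', ← Finset.sum_filter_add_sum_filter_not _ (fun p => p.1 ≤ p.2)]
  calc _ ≤ ∑ p ∈ range n ×ˢ range n with p.1 ≤ p.2, g p.1 p.2
        + ∑ p ∈ range n ×ˢ range n with p.2 ≤ p.1, g p.1 p.2 := by
        gcongr
        · exact fun p _ _ => hg p.1 p.2
        · exact fun h => (not_le.1 h).le
    _ = _ := by rw [hswap]; ring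

lemma sum_filter_le_le_sum_upperPair (g : ℕ → ℕ → ℝ) (hg : ∀ i j, 0 ≤ g i j) (n : ℕ) :
    ∑ p ∈ range n ×ˢ range n with p.1 ≤ p.2, g p.1 p.2
      ≤ ∑ k ∈ range (n ^ 2), g (upperPair k).1.1 (upperPair k).1.2 := by
  let T := {p ∈ range n ×ˢ range n | p.1 ≤ p.2}
  change ∑ p ∈ T, g p.1 p.2 ≤ _
  have hinj : Set.InjOn (fun p : ℕ × ℕ => Nat.pair p.1 (p.2 - p.1)) T := by
    intro p hp q hq h
    have := congrArg (fun k => (upperPair k).1) h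
    simp only [T, coe_filter] at hp hq this
    rwa [upperPair_pair hp.2, upperPair_pair hq.2] at this
  have himage : T.image (fun p => Nat.pair p.1 (p.2 - p.1)) ⊆ range (n ^ 2) := by
    simp only [T, Finset.image_subset_iff, mem_filter, mem_product, mem_range, and_imp]
    intro p h1 h2 _
    exact (Nat.pair_lt_max_add_one_sq _ _).trans_le (Nat.pow_le_pow_left (by omega) 2)
  calc ∑ p ∈ T, g p.1 p.2
      = ∑ p ∈ T, g (upperPair (Nat.pair p.1 (p.2 - p.1))).1.1
          (upperPair (Nat.pair p.1 (p.2 - p.1))).1.2 :=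
        Finset.sum_congr rfl fun p hp => by rw [upperPair_pair (mem_filter.1 hp).2]
    _ = ∑ k ∈ T.image (fun p => Nat.pair p.1 (p.2 - p.1)),
          g (upperPair k).1.1 (upperPair k).1.2 :=
        (Finset.sum_image (f := fun k => g (upperPair k).1.1 (upperPair k).1.2) hinj).symm
    _ ≤ _ := Finset.sum_le_sum_of_subset_of_nonneg himage fun k _ _ => hg _ _

section Probability

variable {Ω : Type*} [MeasurableSpace Ω]

lemma ae_eventually_sum_range_le_mul {μ : Measure Ω} {X : ℕ → Ω → ℝ}
    (hint : Integrable (X 0) μ) (hindep : Pairwise fun k l => X k ⟂ᵢ[μ] X l)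
    (hident : ∀ k, IdentDistrib (X k) (X 0) μ μ) {c : ℝ} (hc : μ[X 0] < c) :
    ∀ᵐ ω ∂μ, ∀ᶠ n : ℕ in atTop, ∑ k ∈ range n, X k ω ≤ c * n := by
  filter_upwards [strong_law_ae X hint hindep hident] with ω hω
  filter_upwards [hω.eventually_lt_const hc, eventually_gt_atTop 0] with n hn hn0
  rw [smul_eq_mul, inv_mul_lt_iff₀ (by exact_mod_cast hn0)] at hn
  linarith

lemma iIndepFun_row {P : Measure Ω} {U : ℕ → ℕ → Ω → ℝ} (hsymm : ∀ i j, U i j = U j i)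
    (hindep : iIndepFun (fun p : {q : ℕ × ℕ // q.1 ≤ q.2} => U p.1.1 p.1.2) P) (i : ℕ) :
    iIndepFun (fun j => U i j) P := by
  have hinj : Function.Injective
      fun j : ℕ => (⟨(min i j, max i j), min_le_max⟩ : {q : ℕ × ℕ // q.1 ≤ q.2}) := by
    intro j k h
    simp only [Subtype.mk.injEq, Prod.mk.injEq] at h
    have := congrArg₂ (· + ·) h.1 h.2
    simp only [min_add_max] at this
    omega
  convert hindep.precomp hinj using 2 with j
  rcases le_total i j with h | h
  · simp [h]
  · simp [h, hsymm i j]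

lemma ae_eventually_sum_sq_le {P : Measure Ω} {U : ℕ → ℕ → Ω → ℝ} {L : Measure ℝ}
    (hmeas : ∀ i j, Measurable (U i j)) (hsymm : ∀ i j, U i j = U j i)
    (hdist : ∀ i j, Measure.map (U i j) P = L)
    (hindep : iIndepFun (fun p : {q : ℕ × ℕ // q.1 ≤ q.2} => U p.1.1 p.1.2) P)
    (hL2 : Integrable (fun x => x ^ 2) L) :
    ∀ᵐ ω ∂P, ∀ᶠ n : ℕ in atTop,
      ∑ i ∈ range n, ∑ j ∈ range n, U i j ω ^ 2 ≤ 2 * (∫ x, x ^ 2 ∂L + 1) * n ^ 2 := by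
  set Y : ℕ → Ω → ℝ := fun k ω => U (upperPair k).1.1 (upperPair k).1.2 ω ^ 2
  have hmap : ∀ k, Measure.map (Y k) P = Measure.map (· ^ 2) L := fun k => by
    rw [← hdist (upperPair k).1.1 (upperPair k).1.2, Measure.map_map (by fun_prop) (hmeas _ _)]
    rfl
  have hint : Integrable (Y 0) P :=
    (integrable_map_measure (g := fun x : ℝ => x ^ 2) (by fun_prop) (hmeas _ _).aemeasurable).1
      (by rwa [hdist])
  have hindepY : Pairwise fun k l => Y k ⟂ᵢ[P] Y l := fun k l hkl =>
    ((hindep.precomp upperPair_injective).comp (fun _ x => x ^ 2) fun _ => by fun_prop).indepFun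
      hkl
  have hident : ∀ k, IdentDistrib (Y k) (Y 0) P P := fun k =>
    ⟨by fun_prop, by fun_prop, by rw [hmap, hmap]⟩
  have hmean : P[Y 0] = ∫ x, x ^ 2 ∂L := by
    rw [← hdist (upperPair 0).1.1 (upperPair 0).1.2,
      integral_map (hmeas _ _).aemeasurable (by fun_prop)]
  filter_upwards [ae_eventually_sum_range_le_mul hint hindepY hident
    (c := ∫ x, x ^ 2 ∂L + 1) (by rw [hmean]; exact lt_add_one _)] with ω hω
  filter_upwards [(tendsto_pow_atTop two_ne_zero).eventually hω] with n hn
  calc ∑ i ∈ range n, ∑ j ∈ range n, U i j ω ^ 2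
      ≤ 2 * ∑ p ∈ range n ×ˢ range n with p.1 ≤ p.2, U p.1 p.2 ω ^ 2 :=
        sum_range_sum_range_le_two_mul_sum_filter_le (fun i j => U i j ω ^ 2)
          (fun _ _ => sq_nonneg _) (fun i j => by rw [hsymm]) n
    _ ≤ 2 * ∑ k ∈ range (n ^ 2), Y k ω := by
        gcongr
        exact sum_filter_le_le_sum_upperPair (fun i j => U i j ω ^ 2) (fun _ _ => sq_nonneg _) n
    _ ≤ 2 * (∫ x, x ^ 2 ∂L + 1) * n ^ 2 := by
        push_cast at hn
        linarith

lemma integral_exp_neg_mul_le {L : Measure ℝ} [IsProbabilityMeasure L]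
    (hnonneg : ∀ᵐ x ∂L, 0 ≤ x) (hL1 : Integrable (fun x => x) L)
    (hL2 : Integrable (fun x => x ^ 2) L) {t : ℝ} (ht : 0 ≤ t) :
    ∫ x, exp (-t * x) ∂L ≤ exp (-t * ∫ x, x ∂L + t ^ 2 * ∫ x, x ^ 2 ∂L) := by
  have hquad : Integrable (fun x => 1 + -t * x + t ^ 2 * x ^ 2) L :=
    ((integrable_const 1).add (hL1.const_mul (-t))).add (hL2.const_mul (t ^ 2))
  have hexp : Integrable (fun x => exp (-t * x)) L := by
    refine Integrable.of_bound (by fun_prop) 1 ?_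
    filter_upwards [hnonneg] with x hx
    rw [norm_of_nonneg (exp_pos _).le, exp_le_one_iff]
    nlinarith
  calc ∫ x, exp (-t * x) ∂L ≤ ∫ x, 1 + -t * x + t ^ 2 * x ^ 2 ∂L := by
        refine integral_mono_ae hexp hquad ?_
        filter_upwards [hnonneg] with x hx
        have := exp_neg_le_one_sub_add_sq (mul_nonneg ht hx)
        rw [neg_mul]
        linarith
    _ = 1 + (-t * ∫ x, x ∂L + t ^ 2 * ∫ x, x ^ 2 ∂L) := by
        rw [integral_add (f := fun x => 1 + -t * x)
            ((integrable_const 1).add (hL1.const_mul (-t))) (hL2.const_mul (t ^ 2)),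
          integral_add (integrable_const 1) (hL1.const_mul (-t)), integral_const_mul,
          integral_const_mul, integral_const, probReal_univ, one_smul, add_assoc]
    _ ≤ _ := add_one_le_exp _ |>.trans_eq' (add_comm _ _)

lemma measureReal_sum_range_le_half_le {μ : Measure Ω} {X : ℕ → Ω → ℝ} {L : Measure ℝ}
    [IsProbabilityMeasure L] (hindep : iIndepFun X μ) (hmeas : ∀ j, Measurable (X j))
    (hdist : ∀ j, Measure.map (X j) μ = L) (hnonneg : ∀ᵐ x ∂L, 0 ≤ x)
    (hL1 : Integrable (fun x => x) L) (hmean : ∫ x, x ∂L = 1)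
    (hL2 : Integrable (fun x => x ^ 2) L) (n : ℕ) :
    μ.real {ω | ∑ j ∈ range n, X j ω ≤ n / 2}
      ≤ exp (-(16 * (∫ x, x ^ 2 ∂L + 1))⁻¹) ^ n := by
  have := hindep.isProbabilityMeasure
  set m := ∫ x, x ^ 2 ∂L
  have hm : 0 ≤ m := integral_nonneg fun x => sq_nonneg x
  -- chosen so that `t * m ≤ 1 / 4`: each factor of the Chernoff bound is then `≤ exp (-t / 4)`
  set t := (4 * (m + 1))⁻¹
  have ht : 0 ≤ t := by positivity
  have hX : ∀ᵐ ω ∂μ, ∀ j, 0 ≤ X j ω := ae_all_iff.2 fun j =>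
    (ae_map_iff (hmeas j).aemeasurable measurableSet_Ici).1 (hdist j ▸ hnonneg)
  have hint : Integrable (fun ω => exp (-t * ∑ j ∈ range n, X j ω)) μ := by
    refine Integrable.of_bound (by fun_prop) 1 ?_
    filter_upwards [hX] with ω hω
    rw [norm_of_nonneg (exp_pos _).le, exp_le_one_iff, neg_mul, neg_nonpos]
    exact mul_nonneg ht (sum_nonneg fun j _ => hω j)
  have hmgf : mgf (fun ω => ∑ j ∈ range n, X j ω) μ (-t) = (∫ x, exp (-t * x) ∂L) ^ n := by
    have hone : ∀ j, mgf (X j) μ (-t) = ∫ x, exp (-t * x) ∂L := fun j => by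
      rw [mgf, ← hdist j, integral_map (hmeas j).aemeasurable (by fun_prop)]
    rw [← Finset.sum_fn, hindep.mgf_sum hmeas, Finset.prod_congr rfl fun j _ => hone j,
      prod_const, card_range]
  calc μ.real {ω | ∑ j ∈ range n, X j ω ≤ n / 2}
      ≤ exp (-(-t) * (n / 2)) * (∫ x, exp (-t * x) ∂L) ^ n := by
        rw [← hmgf]
        exact measure_le_le_exp_mul_mgf _ (neg_nonpos.2 ht) hint
    _ ≤ exp (t * (n / 2)) * exp (-t + t ^ 2 * m) ^ n := by
        rw [neg_neg]
        gcongr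
        simpa [hmean] using integral_exp_neg_mul_le hnonneg hL1 hL2 ht
    _ = exp ((-(t / 2) + t * (t * m)) * n) := by
        rw [← exp_nat_mul, ← exp_add]
        ring_nf
    _ ≤ exp (-(t / 4) * n) := by
        gcongr
        have : t * m ≤ 1 / 4 := by
          rw [inv_mul_le_iff₀ (by positivity)]
          linarith
        nlinarith
    _ = exp (-(16 * (m + 1))⁻¹) ^ n := by
        rw [← exp_nat_mul]
        congr 1
        simp only [t]
        field_simp
        ring

lemma ae_eventually_forall_lt_notMem {μ : Measure Ω} [IsFiniteMeasure μ] {A : ℕ → ℕ → Set Ω}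
    {r : ℝ} (hr0 : 0 ≤ r) (hr1 : r < 1) (hA : ∀ n i, μ.real (A n i) ≤ r ^ n) :
    ∀ᵐ ω ∂μ, ∀ᶠ n in atTop, ∀ i < n, ω ∉ A n i := by
  have hB : ∀ n, μ (⋃ i ∈ range n, A n i) ≤ ENNReal.ofReal (n * r ^ n) := fun n =>
    calc μ (⋃ i ∈ range n, A n i) ≤ ∑ i ∈ range n, μ (A n i) := measure_biUnion_finset_le _ _
      _ ≤ ∑ _i ∈ range n, ENNReal.ofReal (r ^ n) := by
          gcongr with i
          rw [← ofReal_measureReal]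
          exact ENNReal.ofReal_le_ofReal (hA n i)
      _ = ENNReal.ofReal (n * r ^ n) := by
          rw [sum_const, card_range, nsmul_eq_mul, ENNReal.ofReal_mul (Nat.cast_nonneg n),
            ENNReal.ofReal_natCast]
  have hsummable : Summable fun n : ℕ => (n : ℝ) * r ^ n := by
    simpa using summable_pow_mul_geometric_of_norm_lt_one 1
      (by rwa [norm_of_nonneg hr0] : ‖r‖ < 1)
  have hsum : ∑' n, μ (⋃ i ∈ range n, A n i) ≠ ⊤ := by
    refine ne_top_of_le_ne_top ?_ (ENNReal.tsum_le_tsum hB)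
    rw [← ENNReal.ofReal_tsum_of_nonneg (fun n => by positivity) hsummable]
    exact ENNReal.ofReal_ne_top
  filter_upwards [ae_eventually_notMem hsum] with ω hω
  filter_upwards [hω] with n hn i hi hωi
  exact hn (Set.mem_biUnion (mem_range.2 hi) hωi)

lemma ae_eventually_half_lt_rowSum {P : Measure Ω} [IsProbabilityMeasure P]
    {U : ℕ → ℕ → Ω → ℝ} {L : Measure ℝ} [IsProbabilityMeasure L]
    (hmeas : ∀ i j, Measurable (U i j)) (hsymm : ∀ i j, U i j = U j i)
    (hdist : ∀ i j, Measure.map (U i j) P = L)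
    (hindep : iIndepFun (fun p : {q : ℕ × ℕ // q.1 ≤ q.2} => U p.1.1 p.1.2) P)
    (hnonneg : ∀ᵐ x ∂L, 0 ≤ x) (hL1 : Integrable (fun x => x) L) (hmean : ∫ x, x ∂L = 1)
    (hL2 : Integrable (fun x => x ^ 2) L) :
    ∀ᵐ ω ∂P, ∀ᶠ n : ℕ in atTop, ∀ i < n, (n : ℝ) / 2 < rowSum U n ω i := by
  have hm : 0 < 16 * (∫ x, x ^ 2 ∂L + 1) := by
    have : 0 ≤ ∫ x, x ^ 2 ∂L := integral_nonneg fun x => sq_nonneg x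
    positivity
  filter_upwards [ae_eventually_forall_lt_notMem (A := fun n i => {ω | rowSum U n ω i ≤ n / 2})
    (exp_pos _).le (exp_lt_one_iff.2 (neg_neg_iff_pos.2 (inv_pos.2 hm)))
    fun n i => measureReal_sum_range_le_half_le (iIndepFun_row hsymm hindep i) (hmeas i)
      (hdist i) hnonneg hL1 hmean hL2 n] with ω hω
  filter_upwards [hω] with n hn i hi
  simpa using hn i hi

end Probability

theorem hilbert_schmidt_comparison_general
    {Ω : Type*} [MeasurableSpace Ω] (P : Measure Ω) [IsProbabilityMeasure P]
    (U : ℕ → ℕ → Ω → ℝ) (L : Measure ℝ) [IsProbabilityMeasure L]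
    (hmeas : ∀ i j, Measurable (U i j))
    (hsymm : ∀ i j, U i j = U j i)
    (hdist : ∀ i j, Measure.map (U i j) P = L)
    (hindep : iIndepFun
      (fun p : {q : ℕ × ℕ // q.1 ≤ q.2} => U p.1.1 p.1.2) P)
    (hnonneg : ∀ᵐ x ∂L, 0 ≤ x)
    (hL1 : Integrable (fun x => x) L)
    (hmean : ∫ x, x ∂L = 1)
    (hL2 : Integrable (fun x => x^2) L) :
    ∀ᵐ ω ∂P, ∃ C : ℝ, ∀ᶠ n : ℕ in atTop,
      (1/n : ℝ) * ∑ i : Fin n, ∑ j : Fin n,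
          (Real.sqrt n * Smat U n ω i j - U i j ω / Real.sqrt n)^2
        ≤ C * (deltaMax U n ω)^2 := by
  filter_upwards [ae_eventually_half_lt_rowSum hmeas hsymm hdist hindep hnonneg hL1 hmean hL2,
    ae_eventually_sum_sq_le hmeas hsymm hdist hindep hL2] with ω hrow hsq
  refine ⟨18 * (∫ x, x ^ 2 ∂L + 1), ?_⟩
  filter_upwards [hrow, hsq, eventually_gt_atTop 0] with n hrow hsq hn
  have hn' : (0 : ℝ) < n := by exact_mod_cast hn
  calc _ ≤ 9 * deltaMax U n ω ^ 2 / n ^ 2 * ∑ i ∈ range n, ∑ j ∈ range n, U i j ω ^ 2 :=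
        hilbertSchmidt_sq_le_of_half_lt_rowSum U ω hn hrow
    _ ≤ 9 * deltaMax U n ω ^ 2 / n ^ 2 * (2 * (∫ x, x ^ 2 ∂L + 1) * n ^ 2) := by gcongr
    _ = 18 * (∫ x, x ^ 2 ∂L + 1) * deltaMax U n ω ^ 2 := by field_simp; ring

/-- **Hilbert–Schmidt comparison (estimate (2.10) in the proof of Theorem 1.1).**
Almost surely, `(1/n)·∑_{i,j} (√n·S_{i,j} − U_{i,j}/√n)² = O(δ_n²)`: there is a constant
`C` such that for all large `n` this normalized squared Hilbert–Schmidt distance between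
`√n·S` and `W̃ = U/√n` is at most `C·δ_n²`. -/
theorem hilbert_schmidt_comparison
    {Ω : Type*} [MeasurableSpace Ω] (P : Measure Ω) [IsProbabilityMeasure P]
    (U : ℕ → ℕ → Ω → ℝ) (L : Measure ℝ) [IsProbabilityMeasure L]
    (hmeas : ∀ i j, Measurable (U i j))
    (hsymm : ∀ i j, U i j = U j i)
    (hdist : ∀ i j, Measure.map (U i j) P = L)
    (hindep : iIndepFun
      (fun p : {q : ℕ × ℕ // q.1 ≤ q.2} => U p.1.1 p.1.2) P)
    (hnonneg : ∀ᵐ x ∂L, 0 ≤ x)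
    (hL1 : Integrable (fun x => x) L)
    (hmean : ∫ x, x ∂L = 1)
    (σ : ℝ) (hσ : 0 < σ)
    (hL2 : Integrable (fun x => x^2) L)
    (hvar : ∫ x, (x - 1)^2 ∂L = σ^2) :
    ∀ᵐ ω ∂P, ∃ C : ℝ, ∀ᶠ n : ℕ in atTop,
      (1/n : ℝ) * ∑ i : Fin n, ∑ j : Fin n,
          (Real.sqrt n * Smat U n ω i j - U i j ω / Real.sqrt n)^2
        ≤ C * (deltaMax U n ω)^2 :=
  hilbert_schmidt_comparison_general P U L hmeas hsymm hdist hindep hnonneg hL1 hmean hL2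
end
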